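/- Let w : Fin 4 → (ZMod 2) × (ZMod 2) be a length-4 word lying in F¹¹ ∩ F⁰¹ ∩ F¹⁰, decoded into the free abelian group on two generators. Then the product dec(w 0) * dec(w 1) * dec(w 2) * dec(w 3) is the identity of Multiplicative (ℤ × ℤ) if and only if w is 01-balanced and (w is 11-constant or w is 10-balanced). (This is the correctness of the three-query procedure solving the word problem for length-4 words in the free abelian group ⟨a, b ∣ ab = ba⟩ under the promise that w is feasible for all three parities.) -/
import Mathlib


/-- Generalized parity `pˣ` of `y ∈ (ZMod 2) × (ZMod 2)`:
`0` if `y ∈ {00, x}` and `1` otherwise. -/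
def genParity (x y : ZMod 2 × ZMod 2) : ZMod 2 :=
  if y = (0, 0) ∨ y = x then 0 else 1

/-- A length-4 word `w` is `x`-constant if `pˣ(w i)` takes the same value
for all `i`. -/
def IsXConstant (x : ZMod 2 × ZMod 2) (w : Fin 4 → ZMod 2 × ZMod 2) : Prop :=
  ∀ i j : Fin 4, genParity x (w i) = genParity x (w j)

/-- A length-4 word `w` is `x`-balanced if exactly 2 of the 4 indices `i`
satisfy `pˣ(w i) = 1`. -/
def IsXBalanced (x : ZMod 2 × ZMod 2) (w : Fin 4 → ZMod 2 × ZMod 2) : Prop :=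
  (Finset.univ.filter fun i : Fin 4 => genParity x (w i) = 1).card = 2

/-- The set `Fˣ` of `x`-feasible words of length 4: `x`-constant or `x`-balanced. -/
def feasible (x : ZMod 2 × ZMod 2) : Set (Fin 4 → ZMod 2 × ZMod 2) :=
  {w | IsXConstant x w ∨ IsXBalanced x w}

/-- Decoding of the paired alphabet into the free abelian group of rank 2
(written multiplicatively), with `a = (1,0)` and `b = (0,1)`:
`dec 00 = a`, `dec 01 = b`, `dec 10 = b⁻¹`, `dec 11 = a⁻¹`. -/
def dec (y : ZMod 2 × ZMod 2) : Multiplicative (ℤ × ℤ) :=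
  if y = (0, 0) then Multiplicative.ofAdd ((1 : ℤ), (0 : ℤ))
  else if y = (0, 1) then Multiplicative.ofAdd ((0 : ℤ), (1 : ℤ))
  else if y = (1, 0) then (Multiplicative.ofAdd ((0 : ℤ), (1 : ℤ)))⁻¹
  else (Multiplicative.ofAdd ((1 : ℤ), (0 : ℤ)))⁻¹

instance (x : ZMod 2 × ZMod 2) (w : Fin 4 → ZMod 2 × ZMod 2) : Decidable (IsXConstant x w) := by
  unfold IsXConstant; infer_instance
instance (x : ZMod 2 × ZMod 2) (w : Fin 4 → ZMod 2 × ZMod 2) : Decidable (IsXBalanced x w) := by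
  unfold IsXBalanced; infer_instance

set_option maxRecDepth 40000 in
/-- Correctness of the three-query procedure solving the word problem for
length-4 words in the free abelian group `⟨a, b ∣ ab = ba⟩`, under the promise
`w ∈ F¹¹ ∩ F⁰¹ ∩ F¹⁰`. -/
theorem word_problem_free_abelian (w : Fin 4 → ZMod 2 × ZMod 2)
    (hw : w ∈ feasible (1, 1) ∩ feasible (0, 1) ∩ feasible (1, 0)) :
    dec (w 0) * dec (w 1) * dec (w 2) * dec (w 3) = 1 ↔
      IsXBalanced (0, 1) w ∧ (IsXConstant (1, 1) w ∨ IsXBalanced (1, 0) w) := by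
  revert hw
  simp only [feasible, Set.mem_inter_iff, Set.mem_setOf_eq]
  revert w
  decide
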